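/- No-passing rule for the ground-state evolution of the random-field Ising model (increasing field): if C₁ is a ground state at field H₁ and C₂ is a ground state at field H₂ with H₁ < H₂, then for every site i, C₁ i = 1 implies C₂ i = 1 (equivalently C₁ i ≤ C₂ i for all i); flipped spins never flip back as the field is increased. This holds even when ground states are degenerate. -/

import Mathlib

/-!
For ferromagnetic couplings the zero-field energy `E₀` is submodular with respect to the
pointwise order on configurations (edge by edge this is the binary rearrangement inequality),
while the magnetization `M` is modular. Testing the ground state `C₁` at `H₁` against `C₁ ⊓ C₂`
and the ground state `C₂` at `H₂` against `C₁ ⊔ C₂` and adding the two inequalities gives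
`(H₂ - H₁) * (M (C₁ ⊔ C₂) - M C₂) ≤ 0`. Since `C₂ ≤ C₁ ⊔ C₂` pointwise, this forces
`C₁ ⊔ C₂ = C₂`, i.e. `C₁ ≤ C₂`.
-/

open Finset

section RFIM

variable {V : Type*} [Fintype V] [Nonempty V] [DecidableEq V]
variable (G : SimpleGraph V) [DecidableRel G.Adj]
variable (J : ℝ) (h : V → ℝ)

/-- A spin configuration: every spin is `-1` or `+1`. -/
def IsSpin (σ : V → ℤ) : Prop := ∀ i, σ i = -1 ∨ σ i = 1

/-- The product of the two spins at the endpoints of an (unordered) edge. -/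
noncomputable def pairProd (σ : V → ℤ) : Sym2 V → ℝ :=
  Sym2.lift ⟨fun i j => (σ i : ℝ) * (σ j : ℝ), fun i j => by ring⟩

/-- Energy of configuration `σ` at external field `H`. -/
noncomputable def E (σ : V → ℤ) (H : ℝ) : ℝ :=
  -J * (∑ e ∈ G.edgeFinset, pairProd σ e) - ∑ i, (H + h i) * (σ i : ℝ)

/-- Magnetization. -/
noncomputable def M (σ : V → ℤ) : ℝ := ∑ i, (σ i : ℝ)

/-- Energy at zero field. -/
noncomputable def E₀ (σ : V → ℤ) : ℝ := E G J h σ 0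

/-- `σ` is a ground state at field `H`. -/
def IsGroundState (H : ℝ) (σ : V → ℤ) : Prop :=
  IsSpin σ ∧ ∀ τ : V → ℤ, IsSpin τ → E G J h σ H ≤ E G J h τ H

end RFIM

lemma mul_add_mul_le_max_mul_max_add_min_mul_min {R : Type*} [CommRing R] [LinearOrder R]
    [IsStrictOrderedRing R] (a b c d : R) :
    a * b + c * d ≤ max a c * max b d + min a c * min b d := by
  rcases le_total a c with hac | hca <;> rcases le_total b d with hbd | hdb
  · simp only [max_eq_right hac, max_eq_right hbd, min_eq_left hac, min_eq_left hbd]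
    linarith
  · simp only [max_eq_right hac, max_eq_left hdb, min_eq_left hac, min_eq_right hdb]
    linarith [mul_add_mul_le_mul_add_mul hac hdb]
  · simp only [max_eq_left hca, max_eq_right hbd, min_eq_right hca, min_eq_left hbd]
    linarith [mul_add_mul_le_mul_add_mul hca hbd]
  · simp only [max_eq_left hca, max_eq_left hdb, min_eq_right hca, min_eq_right hdb]
    linarith

section Submodularity

variable {V : Type*}

lemma IsSpin.sup {σ τ : V → ℤ} (hσ : IsSpin σ) (hτ : IsSpin τ) : IsSpin (σ ⊔ τ) := fun i =>
  (max_choice (σ i) (τ i)).elim (fun hi => by simpa only [Pi.sup_apply, hi] using hσ i)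
    (fun hi => by simpa only [Pi.sup_apply, hi] using hτ i)

lemma IsSpin.inf {σ τ : V → ℤ} (hσ : IsSpin σ) (hτ : IsSpin τ) : IsSpin (σ ⊓ τ) := fun i =>
  (min_choice (σ i) (τ i)).elim (fun hi => by simpa only [Pi.inf_apply, hi] using hσ i)
    (fun hi => by simpa only [Pi.inf_apply, hi] using hτ i)

lemma pairProd_add_pairProd_le_sup_add_inf (σ τ : V → ℤ) (e : Sym2 V) :
    pairProd σ e + pairProd τ e ≤ pairProd (σ ⊔ τ) e + pairProd (σ ⊓ τ) e := by
  induction e using Sym2.ind with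
  | _ i j =>
    simp only [pairProd, Sym2.lift_mk, Pi.sup_apply, Pi.inf_apply, Int.cast_max, Int.cast_min]
    exact mul_add_mul_le_max_mul_max_add_min_mul_min _ _ _ _

variable [Fintype V]

lemma M_sup_add_M_inf (σ τ : V → ℤ) : M (σ ⊔ τ) + M (σ ⊓ τ) = M σ + M τ := by
  simp only [M, ← sum_add_distrib]
  exact sum_congr rfl fun i _ => by exact_mod_cast max_add_min (σ i) (τ i)

lemma eq_of_le_of_M_le {σ τ : V → ℤ} (hστ : σ ≤ τ) (hM : M τ ≤ M σ) : σ = τ := by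
  have hle : ∀ i ∈ univ, (σ i : ℝ) ≤ τ i := fun i _ => by exact_mod_cast hστ i
  have heq := (sum_eq_sum_iff_of_le hle).mp (le_antisymm (sum_le_sum hle) hM)
  exact funext fun i => by exact_mod_cast heq i (mem_univ i)

variable (G : SimpleGraph V) [DecidableRel G.Adj] (J : ℝ) (h : V → ℝ)

lemma E_eq_E₀_sub_mul_M (σ : V → ℤ) (H : ℝ) : E G J h σ H = E₀ G J h σ - H * M σ := by
  simp only [E₀, E, M, add_mul, sum_add_distrib, mul_sum, zero_add]
  ring

lemma E₀_sup_add_E₀_inf_le (hJ : 0 ≤ J) (σ τ : V → ℤ) :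
    E₀ G J h (σ ⊔ τ) + E₀ G J h (σ ⊓ τ) ≤ E₀ G J h σ + E₀ G J h τ := by
  have hedge : ∑ e ∈ G.edgeFinset, pairProd σ e + ∑ e ∈ G.edgeFinset, pairProd τ e ≤
      ∑ e ∈ G.edgeFinset, pairProd (σ ⊔ τ) e + ∑ e ∈ G.edgeFinset, pairProd (σ ⊓ τ) e := by
    simp only [← sum_add_distrib]
    exact sum_le_sum fun e _ => pairProd_add_pairProd_le_sup_add_inf σ τ e
  have hfield : ∑ i, h i * ((σ ⊔ τ) i : ℝ) + ∑ i, h i * ((σ ⊓ τ) i : ℝ) =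
      ∑ i, h i * (σ i : ℝ) + ∑ i, h i * (τ i : ℝ) := by
    simp only [← sum_add_distrib, ← mul_add, Pi.sup_apply, Pi.inf_apply, Int.cast_max,
      Int.cast_min, max_add_min]
  simp only [E₀, E, zero_add]
  linarith [mul_le_mul_of_nonneg_left hedge hJ]

theorem IsGroundState.le_of_lt {H₁ H₂ : ℝ} {C₁ C₂ : V → ℤ} (hJ : 0 ≤ J)
    (h₁ : IsGroundState G J h H₁ C₁) (h₂ : IsGroundState G J h H₂ C₂) (hH : H₁ < H₂) :
    C₁ ≤ C₂ := by
  have e₁ := h₁.2 _ (h₁.1.inf h₂.1)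
  have e₂ := h₂.2 _ (h₁.1.sup h₂.1)
  rw [E_eq_E₀_sub_mul_M, E_eq_E₀_sub_mul_M] at e₁ e₂
  have hE₀ := E₀_sup_add_E₀_inf_le G J h hJ C₁ C₂
  have hM := M_sup_add_M_inf C₁ C₂
  have key : (H₂ - H₁) * (M (C₁ ⊔ C₂) - M C₂) ≤ 0 := by
    linear_combination e₁ + e₂ + hE₀ - H₁ * hM
  have hMsup : M (C₁ ⊔ C₂) ≤ M C₂ :=
    sub_nonpos.mp (nonpos_of_mul_nonpos_right key (sub_pos.mpr hH))
  exact sup_eq_right.mp (eq_of_le_of_M_le le_sup_right hMsup).symm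

end Submodularity

section RFIM

variable {V : Type*} [Fintype V] [Nonempty V] [DecidableEq V]
variable (G : SimpleGraph V) [DecidableRel G.Adj]
variable (J : ℝ) (h : V → ℝ)

/-- No-passing rule (increasing field): flipped spins never flip back as the
external field is increased; this holds even for degenerate ground states. -/
theorem no_passing_increasing
    (hJ : 0 < J) (H₁ H₂ : ℝ) (C₁ C₂ : V → ℤ)
    (h₁ : IsGroundState G J h H₁ C₁) (h₂ : IsGroundState G J h H₂ C₂)
    (hH : H₁ < H₂) :
    ∀ i, C₁ i = 1 → C₂ i = 1 := by
  intro i hi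
  have hle : C₁ i ≤ C₂ i := IsGroundState.le_of_lt G J h hJ.le h₁ h₂ hH i
  exact (h₂.1 i).resolve_left (by omega)

end RFIM
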